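/- Let n ≥ 1, 1 ≤ h ≤ n, 0 ≤ a ≤ h−1 and 0 ≤ b ≤ n−h be integers and λ > 0 a real number. Then Σ_{i=0}^{b} C(n,i) C(n,b−i) λ^{−i} Σ_{i_1+i_2+i_3+i_4+i_5=a} C(2,i_1) C(h,i_2) C(h,i_3) C(n−i,i_4) C(n−(b−i),i_5) 2^{a−i_2} λ^{−i_4} = Σ_{u=0}^{a} (2/λ)^{a−u} C(h,u) C(2n+h+2−b, a−u) Σ_{i=0}^{b} C(n,i) C(n,b−i) λ^{−i} Σ_{s=0}^{a−u} [(u−a)_s (b−i−n−h−2)_s / ((b−2n−h−2)_s s!)] (1−λ)^s. (Equivalently: the coefficient A_{a,b}^{(n,h,λ,1/2)} = (−1)^a λ^{n−1} 2^b 2^{1−2n} times the left-hand side equals the same prefactor times the right-hand side, the inner s-sum being the terminating Gauss hypergeometric series ₂F₁(u−a, b−i−n−h−2; b−2n−h−2; 1−λ).) -/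

import Mathlib

/-!
Read the quintuple sum as a coefficient: it is `2^a` times the coefficient of `t^a` in
`(1+t)^2 (1+t/2)^h (1+t)^h (1+t/λ)^(n-i) (1+t)^(n-b+i)`. Splitting off `(1+t/2)^h` gives the
`u`-sum, and what is left is `[t^m] (1+t/λ)^A (1+t)^D` with `m = a-u`, `D = 2+h+n-b+i`
and `A + D = 2n+h+2-b`. Rescaling `t ↦ λ t` and writing `1 + λ t = (1 + t) + (λ - 1) t` turns this
coefficient into `λ^(-m) C(A+D, m) ₂F₁(-m, -D; -(A+D); 1-λ)`, the series terminating at `s = m`.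
-/

/-- Rising factorial of a real number: `(x)_s = x (x+1) ⋯ (x+s−1)`, with `(x)_0 = 1`. -/
noncomputable def rfr (x : ℝ) (s : ℕ) : ℝ := ∏ i ∈ Finset.range s, (x + (i : ℝ))

open Finset Polynomial

theorem Finset.Nat.sum_antidiagonalTuple_succ {M : Type*} [AddCommMonoid M] (k n : ℕ)
    (f : (Fin (k + 1) → ℕ) → M) :
    ∑ x ∈ Nat.antidiagonalTuple (k + 1) n, f x =
      ∑ p ∈ antidiagonal n, ∑ x ∈ Nat.antidiagonalTuple k p.2, f (Fin.cons p.1 x) := by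
  simp only [Finset.sum, Nat.antidiagonalTuple, Multiset.Nat.antidiagonalTuple,
    List.Nat.antidiagonalTuple, Multiset.map_coe, Multiset.sum_coe, List.flatMap_def,
    List.map_flatten, List.sum_flatten, List.map_map, Function.comp_def]
  rw [show (antidiagonal n).val = (List.Nat.antidiagonal n : Multiset (ℕ × ℕ)) from rfl,
    Multiset.map_coe, Multiset.sum_coe]

theorem Polynomial.coeff_prod_fin {R : Type*} [CommSemiring R] (k : ℕ) (f : Fin k → R[X])
    (n : ℕ) :
    (∏ i, f i).coeff n = ∑ x ∈ Finset.Nat.antidiagonalTuple k n, ∏ i, (f i).coeff (x i) := by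
  induction k generalizing n with
  | zero => cases n <;> simp [coeff_one]
  | succ k ih =>
    simp only [Fin.prod_univ_succ, coeff_mul, ih, Finset.Nat.sum_antidiagonalTuple_succ,
      Finset.mul_sum, Fin.cons_zero, Fin.cons_succ]

theorem Polynomial.coeff_one_add_C_mul_X_pow {R : Type*} [CommSemiring R] (c : R) (N k : ℕ) :
    ((1 + C c * X) ^ N).coeff k = N.choose k * c ^ k := by
  have : (1 + C c * X) ^ N = ((1 + X) ^ N).comp (C c * X) := by
    simp [pow_comp]
  rw [this, comp_C_mul_X_coeff, coeff_one_add_X_pow]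

theorem Finset.sum_range_succ_eq_sum_range_succ_of_eq_zero {M : Type*} [AddCommMonoid M]
    {f : ℕ → M} {p q : ℕ} (hp : ∀ k, p < k → f k = 0) (hq : ∀ k, q < k → f k = 0) :
    ∑ k ∈ range (p + 1), f k = ∑ k ∈ range (q + 1), f k := by
  wlog hpq : p ≤ q generalizing p q
  · exact (this hq hp (by omega)).symm
  refine sum_subset (range_subset_range.2 (by omega)) fun k hk hkp => hp k ?_
  simp only [mem_range] at hk hkp
  omega

theorem Polynomial.coeff_one_add_X_pow_mul_one_add_C_mul_X_pow {R : Type*} [CommRing R]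
    (A D m : ℕ) (x : R) :
    ((1 + X) ^ A * (1 + C x * X) ^ D).coeff m =
      ∑ s ∈ range (m + 1), (D.choose s : R) * (A + D - s).choose (m - s) * (x - 1) ^ s := by
  have hexpand : (1 + X) ^ A * (1 + C x * X) ^ D =
      ∑ s ∈ range (D + 1),
        C ((D.choose s : R) * (x - 1) ^ s) * (X ^ s * (1 + X) ^ (A + D - s)) := by
    rw [show 1 + C x * X = C (x - 1) * X + (1 + X) by simp only [C_sub, C_1]; ring,
      add_pow (C (x - 1) * X), mul_sum]
    refine sum_congr rfl fun s hs => ?_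
    rw [show A + D - s = (D - s) + A by simp only [mem_range] at hs; omega, pow_add, C_mul, C_pow,
      C_eq_natCast]
    ring
  rw [hexpand, finsetSum_coeff]
  simp only [coeff_C_mul, coeff_X_pow_mul', coeff_one_add_X_pow]
  rw [sum_range_succ_eq_sum_range_succ_of_eq_zero (q := m)
    (fun s hs => by simp [Nat.choose_eq_zero_of_lt hs])
    (fun s hs => by simp [show ¬s ≤ m by omega])]
  refine sum_congr rfl fun s hs => ?_
  rw [if_pos (Nat.lt_succ_iff.mp (mem_range.mp hs))]
  ring

theorem rfr_neg_natCast (k s : ℕ) : rfr (-k) s = (-1) ^ s * k.descFactorial s := by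
  induction s with
  | zero => simp [rfr]
  | succ s ih =>
    rw [rfr, prod_range_succ, ← rfr, ih, Nat.descFactorial_succ]
    rcases le_or_gt s k with hsk | hsk
    · push_cast [Nat.cast_sub hsk]
      ring
    · simp [Nat.descFactorial_eq_zero_iff_lt.2 hsk]

theorem choose_mul_rfr_neg_div (N D m s : ℕ) (hsm : s ≤ m) (hmN : m ≤ N) :
    (N.choose m : ℝ) * (rfr (-m) s * rfr (-D) s / (rfr (-N) s * s.factorial)) =
      (-1) ^ s * D.choose s * (N - s).choose (m - s) := by
  have hNs : (N.choose s : ℝ) ≠ 0 := by exact_mod_cast (Nat.choose_pos (hsm.trans hmN)).ne'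
  have hchoose : (N.choose m : ℝ) * m.choose s = N.choose s * (N - s).choose (m - s) := by
    exact_mod_cast Nat.choose_mul hsm
  simp only [rfr_neg_natCast, Nat.descFactorial_eq_factorial_mul_choose, Nat.cast_mul]
  field_simp
  linear_combination (D.choose s : ℝ) * hchoose

/-- `₂F₁(a, b; c; z)` truncated after the `z^m` term. -/
noncomputable def hyp2F1Trunc (a b c z : ℝ) (m : ℕ) : ℝ :=
  ∑ s ∈ range (m + 1), rfr a s * rfr b s / (rfr c s * s.factorial) * z ^ s

theorem coeff_one_add_C_inv_mul_X_pow_mul_one_add_X_pow {x : ℝ} (hx : x ≠ 0) {A D m : ℕ}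
    (hm : m ≤ A + D) :
    ((1 + C x⁻¹ * X) ^ A * (1 + X) ^ D).coeff m =
      x⁻¹ ^ m * (A + D).choose m * hyp2F1Trunc (-m) (-D) (-(A + D : ℕ)) (1 - x) m := by
  have hscale : (1 + C x⁻¹ * X) ^ A * (1 + X) ^ D =
      ((1 + X) ^ A * (1 + C x * X) ^ D).comp (C x⁻¹ * X) := by
    simp [mul_comp, pow_comp, ← mul_assoc, ← C_mul, hx]
  rw [hscale, comp_C_mul_X_coeff, coeff_one_add_X_pow_mul_one_add_C_mul_X_pow, hyp2F1Trunc,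
    mul_sum, sum_mul]
  refine sum_congr rfl fun s hs => ?_
  have hsm : s ≤ m := Nat.lt_succ_iff.mp (mem_range.mp hs)
  rw [show x - 1 = -1 * (1 - x) by ring, mul_pow]
  linear_combination -(x⁻¹ ^ m * (1 - x) ^ s) * choose_mul_rfr_neg_div (A + D) D m s hsm hm

theorem sum_antidiagonalTuple_five_eq_coeff (h A B a : ℕ) (lam : ℝ) :
    ∑ x ∈ Nat.antidiagonalTuple 5 a,
        (Nat.choose 2 (x 0) : ℝ) * (h.choose (x 1) : ℝ) * (h.choose (x 2) : ℝ) *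
          (A.choose (x 3) : ℝ) * (B.choose (x 4) : ℝ) * 2 ^ (a - x 1) * lam ^ (-(x 3 : ℤ)) =
      2 ^ a * ((1 + C 2⁻¹ * X) ^ h * ((1 + C lam⁻¹ * X) ^ A * (1 + X) ^ (2 + h + B))).coeff a := by
  have hprod : (1 + C 2⁻¹ * X) ^ h * ((1 + C lam⁻¹ * X) ^ A * (1 + X) ^ (2 + h + B)) =
      ∏ i, ![(1 + X) ^ 2, (1 + C 2⁻¹ * X) ^ h, (1 + X) ^ h, (1 + C lam⁻¹ * X) ^ A,
        (1 + X) ^ B] i := by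
    rw [Fin.prod_univ_five, pow_add, pow_add]
    simp only [Matrix.cons_val]
    ring
  rw [hprod, coeff_prod_fin, mul_sum]
  refine sum_congr rfl fun x hx => ?_
  have hx1 : x 1 ≤ a := (Nat.mem_antidiagonalTuple.mp hx) ▸ single_le_sum (by simp) (mem_univ 1)
  simp only [Fin.prod_univ_five, Matrix.cons_val, coeff_one_add_C_mul_X_pow, coeff_one_add_X_pow]
  have h2 : (2 : ℝ) ^ (a - x 1) = 2 ^ a * 2⁻¹ ^ x 1 := by
    rw [inv_pow, eq_mul_inv_iff_mul_eq₀ (by positivity), ← pow_add, Nat.sub_add_cancel hx1]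
  rw [h2, zpow_neg, zpow_natCast, ← inv_pow]
  ring

theorem sum_antidiagonalTuple_five_eq_sum_hyp2F1Trunc (h A B a : ℕ) {lam : ℝ} (hlam : lam ≠ 0)
    (ha : a ≤ A + (2 + h + B)) :
    ∑ x ∈ Nat.antidiagonalTuple 5 a,
        (Nat.choose 2 (x 0) : ℝ) * (h.choose (x 1) : ℝ) * (h.choose (x 2) : ℝ) *
          (A.choose (x 3) : ℝ) * (B.choose (x 4) : ℝ) * 2 ^ (a - x 1) * lam ^ (-(x 3 : ℤ)) =
      ∑ u ∈ range (a + 1), (2 / lam) ^ (a - u) * h.choose u * (A + (2 + h + B)).choose (a - u) *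
        hyp2F1Trunc (-(a - u : ℕ)) (-(2 + h + B : ℕ)) (-(A + (2 + h + B) : ℕ)) (1 - lam)
          (a - u) := by
  rw [sum_antidiagonalTuple_five_eq_coeff, coeff_mul, Nat.sum_antidiagonal_eq_sum_range_succ_mk,
    mul_sum]
  refine sum_congr rfl fun u hu => ?_
  have hua : u ≤ a := Nat.lt_succ_iff.mp (mem_range.mp hu)
  rw [coeff_one_add_C_mul_X_pow, coeff_one_add_C_inv_mul_X_pow_mul_one_add_X_pow hlam (by omega)]
  have hpow : (2 : ℝ) ^ a * 2⁻¹ ^ u * lam⁻¹ ^ (a - u) = (2 / lam) ^ (a - u) := by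
    rw [div_eq_mul_inv, mul_pow, ← Nat.sub_add_cancel hua, pow_add, Nat.add_sub_cancel, inv_pow]
    field_simp
  rw [← hpow]
  ring

theorem sum_antidiagonalTuple_five_sub_eq_sum_hyp2F1Trunc {n h a b i : ℕ} (ha : a ≤ h + 2)
    (hbn : b ≤ n) (hib : i ≤ b) {lam : ℝ} (hlam : lam ≠ 0) :
    ∑ x ∈ Nat.antidiagonalTuple 5 a,
        (Nat.choose 2 (x 0) : ℝ) * (h.choose (x 1) : ℝ) * (h.choose (x 2) : ℝ) *
          ((n - i).choose (x 3) : ℝ) * ((n - (b - i)).choose (x 4) : ℝ) *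
          2 ^ (a - x 1) * lam ^ (-(x 3 : ℤ)) =
      ∑ u ∈ range (a + 1),
        (2 / lam) ^ (a - u) * (h.choose u : ℝ) * ((2 * n + h + 2 - b).choose (a - u) : ℝ) *
          hyp2F1Trunc ((u : ℝ) - a) ((b : ℝ) - i - n - h - 2) ((b : ℝ) - 2 * n - h - 2)
            (1 - lam) (a - u) := by
  have hN : n - i + (2 + h + (n - (b - i))) = 2 * n + h + 2 - b := by omega
  have hD : -((2 + h + (n - (b - i)) : ℕ) : ℝ) = (b : ℝ) - i - n - h - 2 := by
    push_cast [Nat.cast_sub (show b - i ≤ n by omega), Nat.cast_sub hib]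
    ring
  have hN' : -((2 * n + h + 2 - b : ℕ) : ℝ) = (b : ℝ) - 2 * n - h - 2 := by
    push_cast [Nat.cast_sub (show b ≤ 2 * n + h + 2 by omega)]
    ring
  rw [sum_antidiagonalTuple_five_eq_sum_hyp2F1Trunc h (n - i) (n - (b - i)) a hlam (by omega), hN,
    hD, hN']
  refine sum_congr rfl fun u hu => ?_
  rw [Nat.cast_sub (Nat.lt_succ_iff.mp (mem_range.mp hu)), neg_sub]

theorem stmt_16_general (n h a b : ℕ)
    (ha : a ≤ h - 1) (hb : b ≤ n - h) (lam : ℝ) (hlam : 0 < lam) :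
    ∑ i ∈ Finset.range (b + 1),
      (n.choose i : ℝ) * (n.choose (b - i) : ℝ) * lam ^ (-(i : ℤ)) *
        ∑ x ∈ Finset.Nat.antidiagonalTuple 5 a,
          (Nat.choose 2 (x 0) : ℝ) * (h.choose (x 1) : ℝ) * (h.choose (x 2) : ℝ) *
            ((n - i).choose (x 3) : ℝ) * ((n - (b - i)).choose (x 4) : ℝ) *
            2 ^ (a - x 1) * lam ^ (-(x 3 : ℤ))
    = ∑ u ∈ Finset.range (a + 1),
        (2 / lam) ^ (a - u) * (h.choose u : ℝ) * ((2 * n + h + 2 - b).choose (a - u) : ℝ) *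
          ∑ i ∈ Finset.range (b + 1),
            (n.choose i : ℝ) * (n.choose (b - i) : ℝ) * lam ^ (-(i : ℤ)) *
              ∑ s ∈ Finset.range (a - u + 1),
                (rfr ((u : ℝ) - (a : ℝ)) s *
                    rfr ((b : ℝ) - (i : ℝ) - (n : ℝ) - (h : ℝ) - 2) s /
                    (rfr ((b : ℝ) - 2 * (n : ℝ) - (h : ℝ) - 2) s * (s.factorial : ℝ))) *
                  (1 - lam) ^ s := by
  rw [sum_congr rfl fun i hi => by
    rw [sum_antidiagonalTuple_five_sub_eq_sum_hyp2F1Trunc (by omega) (by omega)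
      (Nat.lt_succ_iff.mp (mem_range.mp hi)) hlam.ne']]
  simp only [hyp2F1Trunc, mul_sum]
  rw [sum_comm]
  refine sum_congr rfl fun u _ => sum_congr rfl fun i _ => sum_congr rfl fun s _ => ?_
  ring

/-- Hypergeometric rewriting of `A_{a,b}^{(n,h,λ,1/2)}`: the quintuple-sum form equals the form
featuring the terminating Gauss series `₂F₁(u−a, b−i−n−h−2; b−2n−h−2; 1−λ)`. -/
theorem stmt_16 (n h a b : ℕ) (hn : 1 ≤ n) (hh1 : 1 ≤ h) (hhn : h ≤ n)
    (ha : a ≤ h - 1) (hb : b ≤ n - h) (lam : ℝ) (hlam : 0 < lam) :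
    ∑ i ∈ Finset.range (b + 1),
      (n.choose i : ℝ) * (n.choose (b - i) : ℝ) * lam ^ (-(i : ℤ)) *
        ∑ x ∈ Finset.Nat.antidiagonalTuple 5 a,
          (Nat.choose 2 (x 0) : ℝ) * (h.choose (x 1) : ℝ) * (h.choose (x 2) : ℝ) *
            ((n - i).choose (x 3) : ℝ) * ((n - (b - i)).choose (x 4) : ℝ) *
            2 ^ (a - x 1) * lam ^ (-(x 3 : ℤ))
    = ∑ u ∈ Finset.range (a + 1),
        (2 / lam) ^ (a - u) * (h.choose u : ℝ) * ((2 * n + h + 2 - b).choose (a - u) : ℝ) *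
          ∑ i ∈ Finset.range (b + 1),
            (n.choose i : ℝ) * (n.choose (b - i) : ℝ) * lam ^ (-(i : ℤ)) *
              ∑ s ∈ Finset.range (a - u + 1),
                (rfr ((u : ℝ) - (a : ℝ)) s *
                    rfr ((b : ℝ) - (i : ℝ) - (n : ℝ) - (h : ℝ) - 2) s /
                    (rfr ((b : ℝ) - 2 * (n : ℝ) - (h : ℝ) - 2) s * (s.factorial : ℝ))) *
                  (1 - lam) ^ s :=
  stmt_16_general n h a b ha hb lam hlam
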